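/- Let S = (x_1, …, x_n) be a finite population of n real numbers all lying in [0,1], and let Y = (y_1, …, y_r) be a sample of size r (1 ≤ r ≤ n) drawn from S uniformly at random without replacement. Then there is an absolute constant C > 0 such that for every δ ∈ (0,1), with probability at least 1 − δ, the deviation of the sample mean from the population mean satisfies |(1/r) Σ_{i=1}^r y_i − (1/n) Σ_{i=1}^n x_i| ≤ C · sqrt((1/r − 1/n) · log(2/δ)). -/

import Mathlib

/-!
Reveal the sample one draw at a time (Serfling's argument). Given the first `k` draws, with sum
`S_k`, the next draw is uniform among the `n - k` unsampled values, whose mean is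
`(n μ - S_k) / (n - k)`. Hoeffding's lemma for this draw shows that adding it to `S_k - k μ`
shrinks the deviation by the factor `(n - k - 1) / (n - k)` at the cost of a Gaussian factor
`exp (c² / 8)`. Choosing the exponents `s / (n - k)` makes these factors chain; the accumulated
variance `∑ 1 / (n - j - 1)²` telescopes to at most `2 (1 / (n - r) - 1 / n)`, so `S_r - r μ`
is sub-Gaussian with variance proxy `r (n - r) / (2 n)`. The Chernoff bound then gives
`P(|Ȳ - μ| ≥ ε) ≤ 2 exp (-ε² / (1 / r - 1 / n))`, and the theorem holds with `C = 1`.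
-/

open Real Finset ProbabilityTheory MeasureTheory
open scoped NNReal

section Uniform

variable {α : Type*} [Fintype α] [Nonempty α]

lemma integral_uniformOfFintype [MeasurableSpace α] [MeasurableSingletonClass α] (X : α → ℝ) :
    ∫ a, X a ∂(PMF.uniformOfFintype α).toMeasure = (∑ a, X a) / Fintype.card α := by
  simp [PMF.integral_eq_sum, Finset.mul_sum, div_eq_inv_mul]

lemma sum_exp_mul_sub_mean_le {y : α → ℝ} (hy : ∀ a, y a ∈ Set.Icc (0 : ℝ) 1) (c : ℝ) :
    ∑ a, exp (c * (y a - (∑ b, y b) / Fintype.card α)) ≤ Fintype.card α * exp (c ^ 2 / 8) := by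
  let _ : MeasurableSpace α := ⊤
  have hoeffding := (hasSubgaussianMGF_of_mem_Icc (measurable_of_finite y).aemeasurable
    (ae_of_all (PMF.uniformOfFintype α).toMeasure hy)).mgf_le c
  have hcard : (0 : ℝ) < Fintype.card α := by exact_mod_cast Fintype.card_pos
  simp only [mgf, integral_uniformOfFintype] at hoeffding
  rw [div_le_iff₀ hcard] at hoeffding
  refine hoeffding.trans_eq ?_
  rw [mul_comm]
  norm_num
  ring_nf

end Uniform

section ComplRange

variable {α β M : Type*} [Fintype α] [DecidableEq α] [Fintype β] [AddCommGroup M]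

lemma Function.Embedding.card_compl_range (e : β ↪ α) :
    Fintype.card {a // a ∉ Set.range e} = Fintype.card α - Fintype.card β := by
  rw [Fintype.card_subtype_compl, Set.card_range_of_injective e.injective]

lemma Function.Embedding.sum_compl_range (e : β ↪ α) (f : α → M) :
    ∑ a : {a // a ∉ Set.range e}, f a = ∑ a, f a - ∑ b, f (e b) := by
  rw [eq_sub_iff_add_eq, ← Fintype.sum_subtype_add_sum_subtype (· ∈ Set.range e) f, add_comm]
  congr 1
  exact (Equiv.sum_comp (Equiv.ofInjective e e.injective) (fun a => f a)).trans
    (Finset.sum_congr (by congr!) fun _ _ => rfl)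

end ComplRange

lemma card_embedding_fin_succ {n k : ℕ} (hk : k < n) :
    (Fintype.card (Fin (k + 1) ↪ Fin n) : ℝ) = (n - k) * Fintype.card (Fin k ↪ Fin n) := by
  simp only [Fintype.card_embedding_eq, Fintype.card_fin, Nat.descFactorial_succ]
  push_cast [Nat.cast_sub hk.le]
  rfl

lemma sum_range_one_div_sub_sq_le {n k : ℕ} (hk : k < n) :
    ∑ j ∈ range k, 1 / ((n : ℝ) - j - 1) ^ 2 ≤ 2 * (1 / ((n : ℝ) - k) - 1 / n) := by
  -- `1 / (m - 1) ^ 2 ≤ 2 / ((m - 1) m)` for `m ≥ 2`, and the right-hand side telescopes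
  have hterm : ∀ j ∈ range k, 1 / ((n : ℝ) - j - 1) ^ 2 ≤
      2 * (1 / (n - (j + 1 : ℕ)) - 1 / (n - j)) := by
    intro j hj
    have hj : (j : ℝ) + 2 ≤ n := by
      have := mem_range.1 hj
      exact_mod_cast (by omega : j + 2 ≤ n)
    have h1 : (0 : ℝ) < n - j - 1 := by linarith
    have h0 : (0 : ℝ) < n - j := by linarith
    have h2 : 2 * (1 / ((n : ℝ) - j - 1) - 1 / (n - j)) = 2 / ((n - j - 1) * (n - j)) := by
      field_simp
      ring
    rw [Nat.cast_succ, ← sub_sub, h2, div_le_div_iff₀ (pow_pos h1 2) (mul_pos h1 h0)]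
    nlinarith
  calc _ ≤ ∑ j ∈ range k, 2 * (1 / (n - (j + 1 : ℕ)) - 1 / ((n : ℝ) - j)) := sum_le_sum hterm
    _ = _ := by
      rw [← mul_sum, sum_range_sub (fun j => 1 / ((n : ℝ) - j))]
      simp

section SampleDeviation

variable {n : ℕ} (x : Fin n → ℝ)

noncomputable def sampleSumDeviation {k : ℕ} (f : Fin k ↪ Fin n) : ℝ :=
  ∑ i, x (f i) - k * (∑ i, x i) / n

variable {x}

lemma sampleSumDeviation_cons {k : ℕ} (e : Fin k ↪ Fin n) (j : {j // j ∉ Set.range e}) :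
    sampleSumDeviation x ((Equiv.embeddingFinSucc k (Fin n)).symm ⟨e, j⟩) =
      sampleSumDeviation x e + x j - (∑ i, x i) / n := by
  simp only [sampleSumDeviation, Equiv.coe_embeddingFinSucc_symm, Fin.sum_univ_succ, Fin.cons_zero,
    Fin.cons_succ]
  push_cast
  ring

lemma sum_exp_sampleSumDeviation_succ_le (hx : ∀ i, x i ∈ Set.Icc (0 : ℝ) 1) {k : ℕ} (hk : k < n)
    (c : ℝ) :
    ∑ f : Fin (k + 1) ↪ Fin n, exp (c * sampleSumDeviation x f) ≤
      (n - k) * exp (c ^ 2 / 8) *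
        ∑ e : Fin k ↪ Fin n, exp (c * ((n - k - 1) / (n - k)) * sampleSumDeviation x e) := by
  rw [← (Equiv.embeddingFinSucc k (Fin n)).symm.sum_comp, Fintype.sum_sigma, Finset.mul_sum]
  refine sum_le_sum fun e _ => ?_
  have hnk : (0 : ℝ) < n - k := by
    rw [sub_pos]
    exact_mod_cast hk
  have hn : (n : ℝ) ≠ 0 := by
    rw [Nat.cast_ne_zero]
    exact Nat.ne_zero_of_lt hk
  have hcard : (Fintype.card {j // j ∉ Set.range e} : ℝ) = n - k := by
    rw [e.card_compl_range, Fintype.card_fin, Fintype.card_fin, Nat.cast_sub hk.le]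
  have : Nonempty {j // j ∉ Set.range e} := by
    rw [← Fintype.card_pos_iff]
    exact_mod_cast hcard ▸ hnk
  -- Hoeffding's lemma applies to the second summand: the new draw is uniform over the
  -- unsampled values
  have hsplit (j : {j // j ∉ Set.range e}) :
      c * sampleSumDeviation x ((Equiv.embeddingFinSucc k (Fin n)).symm ⟨e, j⟩) =
        c * ((n - k - 1) / (n - k)) * sampleSumDeviation x e +
          c * (x j - (∑ j : {j // j ∉ Set.range e}, x j) /
            Fintype.card {j // j ∉ Set.range e}) := by
    rw [sampleSumDeviation_cons, e.sum_compl_range, hcard]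
    simp only [sampleSumDeviation]
    field_simp
    ring
  simp_rw [hsplit, exp_add, ← mul_sum]
  calc _ ≤ exp (c * ((n - k - 1) / (n - k)) * sampleSumDeviation x e) *
        ((n - k) * exp (c ^ 2 / 8)) := by
        gcongr
        exact hcard ▸ sum_exp_mul_sub_mean_le
          (y := fun j : {j // j ∉ Set.range e} => x j) (fun j => hx j) c
    _ = _ := by ring

lemma sum_exp_sampleSumDeviation_le (hx : ∀ i, x i ∈ Set.Icc (0 : ℝ) 1) (s : ℝ) :
    ∀ k < n, ∑ f : Fin k ↪ Fin n, exp (s / (n - k) * sampleSumDeviation x f) ≤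
      Fintype.card (Fin k ↪ Fin n) * exp (s ^ 2 / 8 * ∑ j ∈ range k, 1 / ((n : ℝ) - j - 1) ^ 2)
  | 0, _ => by simp [sampleSumDeviation]
  | k + 1, hk => by
    have hk' : (0 : ℝ) < n - k - 1 := by
      rw [sub_sub, sub_pos]
      exact_mod_cast hk
    have hnk : (n : ℝ) - k ≠ 0 := by linarith
    have hcoeff : s / (n - k - 1) * ((n - k - 1) / (n - k)) = s / (n - k) := by
      field_simp
    calc _ = ∑ f : Fin (k + 1) ↪ Fin n, exp (s / (n - k - 1) * sampleSumDeviation x f) := by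
          push_cast
          simp_rw [sub_add_eq_sub_sub]
      _ ≤ (n - k) * exp ((s / (n - k - 1)) ^ 2 / 8) *
          ∑ e : Fin k ↪ Fin n, exp (s / (n - k) * sampleSumDeviation x e) := by
          have := sum_exp_sampleSumDeviation_succ_le hx (k.lt_succ_self.trans hk) (s / (n - k - 1))
          rwa [hcoeff] at this
      _ ≤ (n - k) * exp ((s / (n - k - 1)) ^ 2 / 8) *
          (Fintype.card (Fin k ↪ Fin n) *
            exp (s ^ 2 / 8 * ∑ j ∈ range k, 1 / ((n : ℝ) - j - 1) ^ 2)) :=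
          mul_le_mul_of_nonneg_left
            (sum_exp_sampleSumDeviation_le hx s k (k.lt_succ_self.trans hk))
            (mul_nonneg (by linarith) (exp_pos _).le)
      _ = _ := by
          rw [card_embedding_fin_succ (k.lt_succ_self.trans hk), sum_range_succ, mul_add, exp_add]
          field_simp

variable {r : ℕ} [MeasurableSpace (Fin r ↪ Fin n)] [MeasurableSingletonClass (Fin r ↪ Fin n)]
  [Nonempty (Fin r ↪ Fin n)]

lemma hasSubgaussianMGF_sampleSumDeviation (hx : ∀ i, x i ∈ Set.Icc (0 : ℝ) 1) (hrn : r < n) :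
    HasSubgaussianMGF (sampleSumDeviation x) (r * (n - r) / (2 * n) : ℝ).toNNReal
      (PMF.uniformOfFintype (Fin r ↪ Fin n)).toMeasure where
  integrable_exp_mul _ := .of_finite
  mgf_le t := by
    have hnr : (0 : ℝ) < n - r := by
      rw [sub_pos]
      exact_mod_cast hrn
    have hn : (0 : ℝ) < n := by linarith [(r.cast_nonneg : (0 : ℝ) ≤ r)]
    have hcard : (0 : ℝ) < Fintype.card (Fin r ↪ Fin n) := by exact_mod_cast Fintype.card_pos
    rw [mgf, integral_uniformOfFintype, div_le_iff₀' hcard, coe_toNNReal _ (by positivity)]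
    calc _ = ∑ f : Fin r ↪ Fin n, exp (t * (n - r) / (n - r) * sampleSumDeviation x f) := by
          rw [mul_div_cancel_right₀ _ hnr.ne']
      _ ≤ _ := sum_exp_sampleSumDeviation_le hx _ r hrn
      _ ≤ _ := by
          gcongr
          calc _ ≤ (t * (n - r)) ^ 2 / 8 * (2 * (1 / ((n : ℝ) - r) - 1 / n)) := by
                gcongr
                exact sum_range_one_div_sub_sq_le hrn
            _ = _ := by
                field_simp
                ring

end SampleDeviation

lemma ProbabilityTheory.HasSubgaussianMGF.measureReal_le_abs_le {Ω : Type*} [MeasurableSpace Ω]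
    {μ : Measure Ω} {X : Ω → ℝ} {c : ℝ≥0} (h : HasSubgaussianMGF X c μ) {ε : ℝ} (hε : 0 ≤ ε) :
    μ.real {ω | ε ≤ |X ω|} ≤ 2 * exp (-ε ^ 2 / (2 * c)) := by
  have hunion : {ω | ε ≤ |X ω|} = {ω | ε ≤ X ω} ∪ {ω | ε ≤ (-X) ω} := by
    ext ω
    simp [le_abs]
  calc _ ≤ μ.real {ω | ε ≤ X ω} + μ.real {ω | ε ≤ (-X) ω} := hunion ▸ measureReal_union_le _ _
    _ ≤ _ := by linarith [h.measure_ge_le hε, h.neg.measure_ge_le hε]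

lemma ENNReal.ofReal_one_sub_le_of_measureReal_compl_le {Ω : Type*} [MeasurableSpace Ω]
    {μ : Measure Ω} [IsProbabilityMeasure μ] {s : Set Ω} (hs : MeasurableSet s) {δ : ℝ}
    (h : μ.real sᶜ ≤ δ) : ENNReal.ofReal (1 - δ) ≤ μ s := by
  rw [← ofReal_measureReal]
  apply ENNReal.ofReal_le_ofReal
  linarith [probReal_compl_eq_one_sub (μ := μ) hs]

theorem measureReal_le_abs_sampleMean_sub_mean_le {n r : ℕ}
    [MeasurableSpace (Fin r ↪ Fin n)] [MeasurableSingletonClass (Fin r ↪ Fin n)]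
    [Nonempty (Fin r ↪ Fin n)] {x : Fin n → ℝ} (hx : ∀ i, x i ∈ Set.Icc (0 : ℝ) 1)
    (hr : 0 < r) (hrn : r < n) {ε : ℝ} (hε : 0 ≤ ε) :
    (PMF.uniformOfFintype (Fin r ↪ Fin n)).toMeasure.real
        {f | ε ≤ |(1 / (r : ℝ)) * ∑ i, x (f i) - (1 / (n : ℝ)) * ∑ i, x i|} ≤
      2 * exp (-ε ^ 2 / (1 / r - 1 / n)) := by
  have hr' : (0 : ℝ) < r := by exact_mod_cast hr
  have hnr : (0 : ℝ) < n - r := by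
    rw [sub_pos]
    exact_mod_cast hrn
  have hn : (0 : ℝ) < n := by linarith
  have hset : {f : Fin r ↪ Fin n | ε ≤ |(1 / (r : ℝ)) * ∑ i, x (f i) - (1 / (n : ℝ)) * ∑ i, x i|} =
      {f | r * ε ≤ |sampleSumDeviation x f|} := by
    ext f
    rw [Set.mem_ofPred_eq, Set.mem_ofPred_eq, ← le_div_iff₀' hr', ← abs_of_pos hr', ← abs_div,
      abs_of_pos hr']
    congr! 2
    rw [sampleSumDeviation]
    field_simp
  rw [hset]
  refine ((hasSubgaussianMGF_sampleSumDeviation hx hrn).measureReal_le_abs_le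
    (by positivity)).trans_eq ?_
  rw [coe_toNNReal _ (by positivity)]
  congr 2
  field_simp

/-- **Hoeffding–Serfling-type concentration for sampling without replacement**
(Theorem 1 of the paper).

There is an absolute constant `C > 0` such that for every finite population
`x : Fin n → ℝ` with values in `[0,1]` and every sample size `1 ≤ r ≤ n`,
if a sample of size `r` is drawn uniformly at random without replacement
(i.e. a uniformly random injection `f : Fin r ↪ Fin n`), then for every
`δ ∈ (0,1)`, with probability at least `1 - δ`,
`|(1/r) ∑ y_i - (1/n) ∑ x_i| ≤ C * sqrt ((1/r - 1/n) * log (2/δ))`. -/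
theorem sample_mean_concentration :
    ∃ C : ℝ, 0 < C ∧
      ∀ (n r : ℕ) [Nonempty (Fin r ↪ Fin n)], 1 ≤ r → r ≤ n →
        ∀ (x : Fin n → ℝ), (∀ i, x i ∈ Set.Icc (0 : ℝ) 1) →
          ∀ δ : ℝ, δ ∈ Set.Ioo (0 : ℝ) 1 →
            letI : MeasurableSpace (Fin r ↪ Fin n) := ⊤
            ENNReal.ofReal (1 - δ) ≤
              (PMF.uniformOfFintype (Fin r ↪ Fin n)).toMeasure
                {f : Fin r ↪ Fin n |
                  |(1 / (r : ℝ)) * ∑ i, x (f i) - (1 / (n : ℝ)) * ∑ i, x i| ≤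
                    C * Real.sqrt ((1 / (r : ℝ) - 1 / (n : ℝ)) * Real.log (2 / δ))} := by
  refine ⟨1, one_pos, fun n r _ hr hrn x hx δ ⟨hδ0, hδ1⟩ => ?_⟩
  let _ : MeasurableSpace (Fin r ↪ Fin n) := ⊤
  refine ENNReal.ofReal_one_sub_le_of_measureReal_compl_le MeasurableSpace.measurableSet_top ?_
  simp only [one_mul, Set.compl_ofPred, not_le]
  rcases hrn.eq_or_lt with rfl | hrn
  · have hsum (f : Fin r ↪ Fin r) : ∑ i, x (f i) = ∑ i, x i :=
      Equiv.sum_comp (.ofBijective f f.injective.bijective_of_finite) x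
    simp [hsum, hδ0.le]
  · have hr' : (0 : ℝ) < r := by exact_mod_cast hr
    have hgap : 0 < 1 / (r : ℝ) - 1 / n :=
      sub_pos.2 (one_div_lt_one_div_of_lt hr' (by exact_mod_cast hrn))
    have hlog : 0 < log (2 / δ) := log_pos (by rw [lt_div_iff₀ hδ0]; linarith)
    refine (measureReal_mono (s₂ := {f | _ ≤ _}) (fun f hf => le_of_lt hf)
      (measure_ne_top _ _)).trans
      ((measureReal_le_abs_sampleMean_sub_mean_le hx hr hrn (sqrt_nonneg _)).trans_eq ?_)
    rw [sq_sqrt (by positivity), neg_div, mul_div_cancel_left₀ _ hgap.ne', exp_neg,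
      exp_log (by positivity), inv_div]
    ring
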